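/- For every odd integer n ≥ 1, every red-blue edge-coloring of the complete graph on 3n vertices contains a red copy of the star K_{1,n} or a blue copy of the fan F_n. -/

import Mathlib

/-- The fan `F n = K₁ + n·K₂`: vertex 0 is the center, and vertices
`2k+1, 2k+2` form the `k`-th edge of the matching, for `k < n`. -/
def fanGraph (n : ℕ) : SimpleGraph (Fin (2 * n + 1)) where
  Adj v w := v ≠ w ∧ (v = 0 ∨ w = 0 ∨ (v.val - 1) / 2 = (w.val - 1) / 2)
  symm := by
    constructor; intro v w h
    obtain ⟨h1, h2⟩ := h
    refine ⟨h1.symm, ?_⟩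
    tauto
  loopless := by constructor; intro v h; exact h.1 rfl

/-- `ContainsCopy G H` : `G` contains a subgraph isomorphic to `H`
(an injective map of vertices sending edges of `H` to edges of `G`). -/
def ContainsCopy {α β : Type*} (G : SimpleGraph α) (H : SimpleGraph β) : Prop :=
  ∃ f : β ↪ α, ∀ ⦃a b : β⦄, H.Adj a b → G.Adj (f a) (f b)

/-- The star `K_{1,n}`: vertex 0 is the center. -/
def starGraph (n : ℕ) : SimpleGraph (Fin (n + 1)) where
  Adj v w := v ≠ w ∧ (v = 0 ∨ w = 0)
  symm := by constructor; intro v w h; exact ⟨h.1.symm, h.2.symm⟩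
  loopless := by constructor; intro v h; exact h.1 rfl


/-!
If some vertex has at least `n` red neighbours, it is the centre of a red `K_{1,n}`. Otherwise
every vertex has at least `2n` blue neighbours. Fix a vertex `v` and let `S` be its blue
neighbourhood: `|S| ≥ 2n`, and every vertex of `S` is blue-adjacent to at least `|S| - n ≥ n`
vertices of `S`. Such a set spans `n` disjoint blue edges, which together with `v` form a
blue `F_n`. Indeed, a matching `M` in `S` with `|M| < n` can be enlarged: either two uncovered
vertices are adjacent, or two uncovered vertices `u ≠ w` have all their (at least `2n > 2|M|`)
neighbours on `M`, so that some edge `xy` of `M` has `u ~ x` and `w ~ y`, and `xy` can be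
replaced by `ux` and `wy`.
-/

open Finset

section Copies

variable {V : Type*} {G : SimpleGraph V}

theorem containsCopy_of_finCons {m : ℕ} {H : SimpleGraph (Fin (m + 1))} (v : V) (e : Fin m ↪ V)
    (hv : ∀ i, G.Adj v (e i)) (he : ∀ i j, H.Adj i.succ j.succ → G.Adj (e i) (e j)) :
    ContainsCopy G H := by
  have hve : v ∉ Set.range e := by
    rintro ⟨i, hi⟩
    exact (hv i).ne hi.symm
  refine ⟨Fin.Embedding.cons e hve, fun a b hab => ?_⟩
  induction a using Fin.cases <;> induction b using Fin.cases
  · exact absurd hab (H.loopless.irrefl 0)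
  · exact hv _
  · exact (hv _).symm
  · exact he _ _ hab

theorem containsCopy_starGraph_of_le_degree {n : ℕ} {v : V} [Fintype (G.neighborSet v)]
    (hv : n ≤ G.degree v) : ContainsCopy G (starGraph n) := by
  classical
  obtain ⟨T, hT, rfl⟩ := exists_subset_card_eq hv
  refine containsCopy_of_finCons v (T.equivFin.symm.toEmbedding.trans (.subtype _))
    (fun i => (G.mem_neighborFinset v _).1 (hT (T.equivFin.symm i).2)) fun i j hij => ?_
  exact absurd hij.2 (by simp [Fin.succ_ne_zero])

theorem containsCopy_fanGraph {n : ℕ} (v : V) (m : Fin n × Fin 2 ↪ V) (hv : ∀ x, G.Adj v (m x))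
    (hm : ∀ k, G.Adj (m (k, 0)) (m (k, 1))) : ContainsCopy G (fanGraph n) := by
  have hm' : ∀ x y : Fin n × Fin 2, x.1 = y.1 → x.2 ≠ y.2 → G.Adj (m x) (m y) := by
    rintro ⟨k, a⟩ ⟨k', b⟩ rfl hab
    fin_cases a <;> fin_cases b
    exacts [absurd rfl hab, hm k, (hm k).symm, absurd rfl hab]
  refine containsCopy_of_finCons v
    (((finCongr (Nat.mul_comm 2 n)).trans finProdFinEquiv.symm).toEmbedding.trans m)
    (fun _ => hv _) fun i j ⟨hne, hij⟩ => ?_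
  have hdiv : (i : ℕ) / 2 = j / 2 := by simpa [Fin.succ_ne_zero] using hij
  have hmod : (i : ℕ) % 2 ≠ j % 2 := fun h => hne (by simp [Fin.ext_iff]; omega)
  exact hm' _ _ (Fin.ext (by simpa using hdiv)) (by simpa [Fin.ext_iff] using hmod)

end Copies

section Matching

variable {V : Type*} [DecidableEq V]

def endpoints (p : V × V) : Finset V := {p.1, p.2}

structure IsMatchingOn (G : SimpleGraph V) (S : Finset V) (M : Finset (V × V)) : Prop where
  adj : ∀ p ∈ M, G.Adj p.1 p.2
  subset : ∀ p ∈ M, endpoints p ⊆ S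
  pairwiseDisjoint : (M : Set (V × V)).PairwiseDisjoint endpoints

variable {G : SimpleGraph V} {S : Finset V} {M : Finset (V × V)}

theorem IsMatchingOn.empty : IsMatchingOn G S ∅ := ⟨by simp, by simp, by simp⟩

theorem IsMatchingOn.mono {M' : Finset (V × V)} (hM : IsMatchingOn G S M) (h : M' ⊆ M) :
    IsMatchingOn G S M' :=
  ⟨fun p hp => hM.adj p (h hp), fun p hp => hM.subset p (h hp),
    hM.pairwiseDisjoint.subset (coe_subset.2 h)⟩

theorem IsMatchingOn.card_biUnion_endpoints (hM : IsMatchingOn G S M) :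
    #(M.biUnion endpoints) = 2 * #M := by
  rw [Finset.card_biUnion hM.pairwiseDisjoint, mul_comm, ← smul_eq_mul, ← sum_const]
  exact sum_congr rfl fun p hp => card_pair (hM.adj p hp).ne

theorem IsMatchingOn.insert_edge {a b : V} (hM : IsMatchingOn G S M) (hab : G.Adj a b)
    (ha : a ∈ S \ M.biUnion endpoints) (hb : b ∈ S \ M.biUnion endpoints) :
    IsMatchingOn G S (insert (a, b) M) ∧ #(insert (a, b) M) = #M + 1 := by
  rw [mem_sdiff, mem_biUnion] at ha hb
  have hdisj : ∀ q ∈ M, Disjoint (endpoints (a, b)) (endpoints q) := fun q hq => by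
    simp only [endpoints, disjoint_insert_left, disjoint_singleton_left]
    exact ⟨fun h => ha.2 ⟨q, hq, h⟩, fun h => hb.2 ⟨q, hq, h⟩⟩
  refine ⟨⟨?_, ?_, ?_⟩, card_insert_of_notMem fun h => ha.2 ⟨_, h, by simp [endpoints]⟩⟩
  · simpa [hab] using hM.adj
  · simpa [endpoints, insert_subset_iff, ha.1, hb.1] using hM.subset
  · rw [coe_insert, Set.pairwiseDisjoint_insert]
    exact ⟨hM.pairwiseDisjoint, fun q hq _ => hdisj q hq⟩

theorem IsMatchingOn.notMem_biUnion_erase {p : V × V} {x : V} (hM : IsMatchingOn G S M)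
    (hp : p ∈ M) (hx : x ∈ endpoints p) : x ∉ (M.erase p).biUnion endpoints := by
  simp only [mem_biUnion, mem_erase, not_exists, not_and]
  exact fun q ⟨hqp, hq⟩ => disjoint_left.1 (hM.pairwiseDisjoint hp hq (Ne.symm hqp)) hx

theorem exists_mem_of_card_lt_card_add_card {N₁ N₂ : Finset V}
    (h₁ : N₁ ⊆ M.biUnion endpoints) (h₂ : N₂ ⊆ M.biUnion endpoints)
    (hcard : 2 * #M < #N₁ + #N₂) : ∃ x ∈ N₁, ∃ y ∈ N₂, (x, y) ∈ M ∨ (y, x) ∈ M := by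
  -- `D` lists every edge of `M` in both orientations, so its first coordinates, and also its
  -- second coordinates, cover every matched vertex.
  set D := M ∪ M.image Prod.swap
  have hD : #D ≤ 2 * #M := (card_union_le _ _).trans
    (by rw [two_mul]; exact Nat.add_le_add_left (card_image_le (s := M)) _)
  have hD₁ : #N₁ ≤ #{d ∈ D | d.1 ∈ N₁} := card_le_card_of_surjOn Prod.fst fun x hx => by
    obtain ⟨p, hp, hxp⟩ := mem_biUnion.1 (h₁ hx)
    simp only [endpoints, mem_insert, mem_singleton] at hxp
    rcases hxp with rfl | rfl
    exacts [⟨p, mem_filter.2 ⟨mem_union_left _ hp, hx⟩, rfl⟩,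
      ⟨p.swap, mem_filter.2 ⟨mem_union_right _ (mem_image_of_mem _ hp), hx⟩, rfl⟩]
  have hD₂ : #N₂ ≤ #{d ∈ D | d.2 ∈ N₂} := card_le_card_of_surjOn Prod.snd fun x hx => by
    obtain ⟨p, hp, hxp⟩ := mem_biUnion.1 (h₂ hx)
    simp only [endpoints, mem_insert, mem_singleton] at hxp
    rcases hxp with rfl | rfl
    exacts [⟨p.swap, mem_filter.2 ⟨mem_union_right _ (mem_image_of_mem _ hp), hx⟩, rfl⟩,
      ⟨p, mem_filter.2 ⟨mem_union_left _ hp, hx⟩, rfl⟩]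
  obtain ⟨d, hd⟩ := inter_nonempty_of_card_lt_card_add_card (filter_subset (·.1 ∈ N₁) D)
    (filter_subset (·.2 ∈ N₂) D) (by omega)
  simp only [mem_inter, mem_filter, D, mem_union, mem_image] at hd
  obtain ⟨⟨hdD, hd₁⟩, -, hd₂⟩ := hd
  refine ⟨d.1, hd₁, d.2, hd₂, ?_⟩
  rcases hdD with hdM | ⟨p, hp, rfl⟩
  exacts [Or.inl hdM, Or.inr hp]

theorem IsMatchingOn.exists_card_succ_of_augmentingPath {x y a b : V} (hM : IsMatchingOn G S M)
    (hxy : (x, y) ∈ M) (ha : a ∈ S \ M.biUnion endpoints) (hb : b ∈ S \ M.biUnion endpoints)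
    (hab : a ≠ b) (hxa : G.Adj x a) (hyb : G.Adj y b) :
    ∃ M', IsMatchingOn G S M' ∧ #M' = #M + 1 := by
  set M₀ := M.erase (x, y)
  have hC₀ : M₀.biUnion endpoints ⊆ M.biUnion endpoints :=
    biUnion_subset_biUnion_of_subset_left _ (erase_subset _ _)
  have hxyS : endpoints (x, y) ⊆ S := hM.subset _ hxy
  have hx : x ∈ S \ M₀.biUnion endpoints :=
    mem_sdiff.2 ⟨hxyS (by simp [endpoints]), hM.notMem_biUnion_erase hxy (by simp [endpoints])⟩
  have hy : y ∈ S \ M₀.biUnion endpoints :=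
    mem_sdiff.2 ⟨hxyS (by simp [endpoints]), hM.notMem_biUnion_erase hxy (by simp [endpoints])⟩
  have hyC : y ∈ M.biUnion endpoints := mem_biUnion.2 ⟨_, hxy, by simp [endpoints]⟩
  have hxC : x ∈ M.biUnion endpoints := mem_biUnion.2 ⟨_, hxy, by simp [endpoints]⟩
  obtain ⟨hM₁, hcard₁⟩ :=
    (hM.mono (erase_subset _ _)).insert_edge hxa hx (sdiff_subset_sdiff le_rfl hC₀ ha)
  have hy₁ : y ∈ S \ (insert (x, a) M₀).biUnion endpoints := by
    simp only [biUnion_insert, endpoints, mem_sdiff, mem_union, mem_insert, mem_singleton,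
      not_or] at hy ha ⊢
    exact ⟨hy.1, ⟨(hM.adj _ hxy).ne.symm, fun h => ha.2 (h ▸ hyC)⟩, hy.2⟩
  have hb₁ : b ∈ S \ (insert (x, a) M₀).biUnion endpoints := by
    simp only [biUnion_insert, endpoints, mem_sdiff, mem_union, mem_insert, mem_singleton,
      not_or] at hb ⊢
    exact ⟨hb.1, ⟨fun h => hb.2 (h ▸ hxC), hab.symm⟩, fun h => hb.2 (hC₀ h)⟩
  obtain ⟨hM₂, hcard₂⟩ := hM₁.insert_edge hyb hy₁ hb₁
  refine ⟨_, hM₂, ?_⟩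
  rw [hcard₂, hcard₁, card_erase_of_mem hxy, Nat.sub_add_cancel (card_pos.2 ⟨_, hxy⟩)]

theorem IsMatchingOn.exists_card_succ [DecidableRel G.Adj] {n : ℕ} (hM : IsMatchingOn G S M)
    (hMn : #M < n) (hS : 2 * n ≤ #S) (hdeg : ∀ u ∈ S, n ≤ #{x ∈ S | G.Adj u x}) :
    ∃ M', IsMatchingOn G S M' ∧ #M' = #M + 1 := by
  set C := M.biUnion endpoints
  by_cases hfree : ∃ a ∈ S \ C, ∃ b ∈ S \ C, G.Adj a b
  · obtain ⟨a, ha, b, hb, hab⟩ := hfree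
    exact ⟨_, hM.insert_edge hab ha hb⟩
  push Not at hfree
  have hN : ∀ u ∈ S \ C, {x ∈ S | G.Adj u x} ⊆ C := fun u hu x hx => by
    by_contra hxC
    exact hfree u hu x (mem_sdiff.2 ⟨(mem_filter.1 hx).1, hxC⟩) (mem_filter.1 hx).2
  have hfree_card : 1 < #(S \ C) := by
    have := le_card_sdiff C S
    rw [hM.card_biUnion_endpoints] at this
    omega
  obtain ⟨u, hu, w, hw, huw⟩ := one_lt_card.1 hfree_card
  have := hdeg u (mem_sdiff.1 hu).1
  have := hdeg w (mem_sdiff.1 hw).1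
  obtain ⟨x, hx, y, hy, hxy | hyx⟩ :=
    exists_mem_of_card_lt_card_add_card (hN u hu) (hN w hw) (by omega)
  · exact hM.exists_card_succ_of_augmentingPath hxy hu hw huw (mem_filter.1 hx).2.symm
      (mem_filter.1 hy).2.symm
  · exact hM.exists_card_succ_of_augmentingPath hyx hw hu huw.symm (mem_filter.1 hy).2.symm
      (mem_filter.1 hx).2.symm

theorem IsMatchingOn.exists_embedding (hM : IsMatchingOn G S M) :
    ∃ m : Fin #M × Fin 2 ↪ V, (∀ x, m x ∈ S) ∧ ∀ k, G.Adj (m (k, 0)) (m (k, 1)) := by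
  let e := M.equivFin.symm
  let f : Fin #M × Fin 2 → V := fun x => ![(e x.1).1.1, (e x.1).1.2] x.2
  have hf : ∀ x, f x ∈ endpoints (e x.1) := by
    rintro ⟨k, j⟩
    fin_cases j <;> simp [f, endpoints]
  refine ⟨⟨f, ?_⟩, fun x => hM.subset _ (e x.1).2 (hf x), fun k => hM.adj _ (e k).2⟩
  rintro ⟨k, i⟩ ⟨k', j⟩ h
  obtain rfl : k = k' := by
    by_contra hne
    have hdisj := hM.pairwiseDisjoint (e k).2 (e k').2
      (Subtype.val_injective.ne (e.injective.ne hne))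
    exact disjoint_left.1 hdisj (hf (k, i)) (h ▸ hf (k', j))
  have hne := (hM.adj _ (e k).2).ne
  fin_cases i <;> fin_cases j <;> simp_all [f]

theorem exists_matching_of_le_card_filter_adj [DecidableRel G.Adj] {n : ℕ} (hS : 2 * n ≤ #S)
    (hdeg : ∀ u ∈ S, n ≤ #{x ∈ S | G.Adj u x}) :
    ∃ m : Fin n × Fin 2 ↪ V, (∀ x, m x ∈ S) ∧ ∀ k, G.Adj (m (k, 0)) (m (k, 1)) := by
  have hgrow : ∀ k ≤ n, ∃ M, IsMatchingOn G S M ∧ #M = k := by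
    intro k hk
    induction k with
    | zero => exact ⟨∅, .empty, rfl⟩
    | succ k ih =>
      obtain ⟨M, hM, rfl⟩ := ih (by omega)
      exact hM.exists_card_succ hk hS hdeg
  obtain ⟨M, hM, rfl⟩ := hgrow n le_rfl
  exact hM.exists_embedding

end Matching

theorem SimpleGraph.card_le_card_filter_compl_adj_add_degree {V : Type*} [DecidableEq V]
    (G : SimpleGraph V) [DecidableRel G.Adj] (S : Finset V) (u : V) [Fintype (G.neighborSet u)] :
    #S ≤ #{x ∈ S | Gᶜ.Adj u x} + G.degree u + 1 := by
  have hcover : S ⊆ {x ∈ S | Gᶜ.Adj u x} ∪ G.neighborFinset u ∪ {u} := fun x hx => by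
    by_cases hxu : x = u
    · simp [hxu]
    by_cases hadj : G.Adj u x
    · simp [hadj]
    · simp [hx, hadj, Ne.symm hxu]
  calc #S ≤ _ := card_le_card hcover
    _ ≤ _ := card_union_le _ _
    _ ≤ _ := Nat.add_le_add_right (card_union_le _ _) _
    _ = _ := by rw [card_neighborFinset_eq_degree, card_singleton]

theorem star_fan_upper_odd_general (n : ℕ) (hn : 1 ≤ n)
    (R : SimpleGraph (Fin (3 * n))) :
    ContainsCopy R (starGraph n) ∨ ContainsCopy Rᶜ (fanGraph n) := by
  classical
  by_cases hstar : ∃ v, n ≤ R.degree v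
  · obtain ⟨v, hv⟩ := hstar
    exact .inl (containsCopy_starGraph_of_le_degree hv)
  push Not at hstar
  let v : Fin (3 * n) := ⟨0, by omega⟩
  set S := Rᶜ.neighborFinset v
  have hS : 2 * n ≤ #S := by
    have := hstar v
    rw [SimpleGraph.card_neighborFinset_eq_degree, SimpleGraph.degree_compl, Fintype.card_fin]
    omega
  have hdeg : ∀ u ∈ S, n ≤ #{x ∈ S | Rᶜ.Adj u x} := fun u _ => by
    have := R.card_le_card_filter_compl_adj_add_degree S u
    have := hstar u
    omega
  obtain ⟨m, hmS, hm⟩ := exists_matching_of_le_card_filter_adj hS hdeg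
  exact .inr (containsCopy_fanGraph v m (fun x => (Rᶜ.mem_neighborFinset v _).1 (hmS x)) hm)

/-- For every odd `n ≥ 1`, every red-blue coloring of `K_{3n}` contains a red
`K_{1,n}` or a blue `F_n`. -/
theorem star_fan_upper_odd (n : ℕ) (hn : 1 ≤ n) (hodd : Odd n)
    (R : SimpleGraph (Fin (3 * n))) :
    ContainsCopy R (starGraph n) ∨ ContainsCopy Rᶜ (fanGraph n) :=
  star_fan_upper_odd_general n hn R
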